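/- Let ν = 4 and define q(x) = √((x−1)² + x), φ(x) = 2(x−1) + 2·q(x), ψ(x) = 2 + (2x−1)/q(x), Φ(x) = (x−1) + ((x−1)² + x/2)/q(x), f(x) = x·ψ(x)/(1 + φ(x)), and g(x) = Φ(x)/(1 + φ(x)). Let σ_1 = 5, σ_2 = 5, σ_3 = 1, and set s_12 = 4/9 − √21/63, s_13 = 1, s_23 = 2/3, T = 10/3 − 28·√21/63. Then the Alternative model's maximum-likelihood equations for a balanced three-player tournament with n = 1 hold: (i) s_12·(1 + f(σ_2/σ_1) + f(σ_1/σ_2)) + s_13·(1 + f(σ_3/σ_1) + f(σ_1/σ_3)) = σ_1/(σ_1+σ_2) + σ_1/(σ_1+σ_3) + f(σ_1/σ_2) + f(σ_1/σ_3); (ii) −s_12·(1 + f(σ_1/σ_2) + f(σ_2/σ_1)) + s_23·(1 + f(σ_3/σ_2) + f(σ_2/σ_3)) = −1 + σ_2/(σ_1+σ_2) + σ_2/(σ_2+σ_3) − f(σ_1/σ_2) + f(σ_2/σ_3); (iii) ν·[s_12·(g(σ_1/σ_2) − g(σ_2/σ_1)) + s_13·(g(σ_1/σ_3) − g(σ_3/σ_1))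 + s_23·(g(σ_2/σ_3) − g(σ_3/σ_2))] + T = ν·[g(σ_1/σ_2) + g(σ_1/σ_3) + g(σ_2/σ_3)]. Moreover, the total scores s_1 = s_12 + s_13 and s_2 = (1 − s_12) + s_23 satisfy s_1 − s_2 = 2/9 − 2·√21/63 > 0, even though σ_1 = σ_2. (Hence in the Alternative model a balanced design can have unequal scores with equal strength parameters, so the model is not consistent for three players.) -/

import Mathlib

noncomputable def q (x : ℝ) : ℝ := Real.sqrt ((x - 1) ^ 2 + x)

noncomputable def φ (x : ℝ) : ℝ := 2 * (x - 1) + 2 * q x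

noncomputable def ψ (x : ℝ) : ℝ := 2 + (2 * x - 1) / q x

noncomputable def Φ (x : ℝ) : ℝ := (x - 1) + ((x - 1) ^ 2 + x / 2) / q x

noncomputable def f (x : ℝ) : ℝ := x * ψ x / (1 + φ x)

noncomputable def g (x : ℝ) : ℝ := Φ x / (1 + φ x)

lemma s21_sq : Real.sqrt 21 ^ 2 = 21 := Real.sq_sqrt (by norm_num)

lemma s21_pos : (0:ℝ) < Real.sqrt 21 := Real.sqrt_pos.mpr (by norm_num)

lemma s21_lt : Real.sqrt 21 < 5 := by
  nlinarith [s21_sq, s21_pos]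

lemma s21_gt : (4:ℝ) < Real.sqrt 21 := by
  nlinarith [s21_sq, s21_pos]

lemma q1 : q 1 = 1 := by
  unfold q; norm_num

lemma q5 : q 5 = Real.sqrt 21 := by
  unfold q; norm_num

lemma q15' : q (1/5 : ℝ) = Real.sqrt 21 / 5 := by
  unfold q
  rw [show ((1/5 : ℝ) - 1) ^ 2 + 1/5 = 21 / 25 by norm_num,
    Real.sqrt_div (by norm_num : (0:ℝ) ≤ 21) 25,
    show (25:ℝ) = 5 ^ 2 by norm_num, Real.sqrt_sq (by norm_num : (0:ℝ) ≤ 5)]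


lemma f1 : f 1 = 1 := by
  unfold f ψ φ; rw [q1]; norm_num

lemma f5 : f 5 = 5 * Real.sqrt 21 / 21 := by
  unfold f ψ φ; rw [q5]
  have h1 := s21_sq; have h2 := s21_pos
  have h3 : (9:ℝ) + 2 * Real.sqrt 21 ≠ 0 := by positivity
  field_simp
  nlinarith [h1, h2]

lemma f15 : f (1/5 : ℝ) = Real.sqrt 21 / 21 := by
  unfold f ψ φ; rw [q15']
  have h1 := s21_sq; have h2 := s21_pos; have h4 := s21_gt
  have h3 : 1 + (2 * ((1:ℝ)/5 - 1) + 2 * (Real.sqrt 21 / 5)) ≠ 0 := by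
    intro h; nlinarith
  have h5 : (5:ℝ) + (2 * (1 - 5) + 2 * Real.sqrt 21) ≠ 0 := by nlinarith
  have h6 : Real.sqrt 21 ≠ 0 := h2.ne'
  have h7 : (5:ℝ) + 2 * (1 - 5 + Real.sqrt 21) ≠ 0 := by nlinarith
  field_simp
  nlinarith [h1, h2]

lemma g1 : g 1 = 1/6 := by
  unfold g Φ φ; rw [q1]; norm_num

lemma g5 : g 5 = (14 + Real.sqrt 21) / 42 := by
  unfold g Φ φ; rw [q5]
  have h1 := s21_sq; have h2 := s21_pos
  have h3 : (9:ℝ) + 2 * Real.sqrt 21 ≠ 0 := by positivity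
  field_simp
  nlinarith [h1, h2]

lemma g15 : g (1/5 : ℝ) = (14 - 3 * Real.sqrt 21) / 42 := by
  unfold g Φ φ; rw [q15']
  have h1 := s21_sq; have h2 := s21_pos; have h4 := s21_gt
  have h3 : 1 + (2 * ((1:ℝ)/5 - 1) + 2 * (Real.sqrt 21 / 5)) ≠ 0 := by
    intro h; nlinarith
  have h5 : (5:ℝ) + (2 * (1 - 5) + 2 * Real.sqrt 21) ≠ 0 := by nlinarith
  have h6 : Real.sqrt 21 ≠ 0 := h2.ne'
  have h7 : (5:ℝ) + 2 * (1 - 5 + Real.sqrt 21) ≠ 0 := by nlinarith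
  field_simp
  nlinarith [h1, h2]

/-- A counterexample to Consistency of the Alternative model with three players:
with ν = 4, σ₁ = σ₂ = 5, σ₃ = 1, the listed scores satisfy the
maximum-likelihood equations of a balanced three-player tournament (n = 1),
yet s₁ ≠ s₂ although σ₁ = σ₂. -/
theorem alternative_inconsistent_three_players
    (ν σ₁ σ₂ σ₃ s₁₂ s₁₃ s₂₃ T : ℝ)
    (hν : ν = 4) (hσ₁ : σ₁ = 5) (hσ₂ : σ₂ = 5) (hσ₃ : σ₃ = 1)
    (hs₁₂ : s₁₂ = 4 / 9 - Real.sqrt 21 / 63) (hs₁₃ : s₁₃ = 1)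
    (hs₂₃ : s₂₃ = 2 / 3) (hT : T = 10 / 3 - 28 * Real.sqrt 21 / 63) :
    (s₁₂ * (1 + f (σ₂ / σ₁) + f (σ₁ / σ₂))
        + s₁₃ * (1 + f (σ₃ / σ₁) + f (σ₁ / σ₃))
      = σ₁ / (σ₁ + σ₂) + σ₁ / (σ₁ + σ₃) + f (σ₁ / σ₂) + f (σ₁ / σ₃)) ∧
    (-(s₁₂ * (1 + f (σ₁ / σ₂) + f (σ₂ / σ₁)))
        + s₂₃ * (1 + f (σ₃ / σ₂) + f (σ₂ / σ₃))
      = -1 + σ₂ / (σ₁ + σ₂) + σ₂ / (σ₂ + σ₃) - f (σ₁ / σ₂) + f (σ₂ / σ₃)) ∧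
    (ν * (s₁₂ * (g (σ₁ / σ₂) - g (σ₂ / σ₁))
          + s₁₃ * (g (σ₁ / σ₃) - g (σ₃ / σ₁))
          + s₂₃ * (g (σ₂ / σ₃) - g (σ₃ / σ₂))) + T
      = ν * (g (σ₁ / σ₂) + g (σ₁ / σ₃) + g (σ₂ / σ₃))) ∧
    ((s₁₂ + s₁₃) - ((1 - s₁₂) + s₂₃) = 2 / 9 - 2 * Real.sqrt 21 / 63) ∧
    (0 < 2 / 9 - 2 * Real.sqrt 21 / 63) := by
  subst hν hσ₁ hσ₂ hσ₃ hs₁₂ hs₁₃ hs₂₃ hT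
  rw [show (5:ℝ)/5 = 1 by norm_num, show (5:ℝ)/1 = 5 by norm_num,
    show (1:ℝ)/5 = (1/5 : ℝ) by norm_num]
  rw [f1, f5, f15, g1, g5, g15]
  refine ⟨by ring, by ring, by ring, by ring, ?_⟩
  nlinarith [s21_lt, s21_pos]
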